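/- arXiv:2012.12937 — 2 statements merged into one kernel-verified Lean document; each statement's English description precedes it below -/
import Mathlib

section
/- Assume the measurable selection condition holds. Then for all y⁰, y¹ in the interior C° of C, the two auxiliary controllability times coincide: T̂_C(y⁰,y¹) = T̄_C(y⁰,y¹). (This holds for an arbitrary measurable constraint set C; no convexity or boundedness of C is needed.) -/
noncomputable section
open MeasureTheory Set RealInnerProductSpace
open scoped ENNReal

/-- Euclidean state space `ℝ^n`. -/
abbrev Euc (n : ℕ) := EuclideanSpace ℝ (Fin n)

/-- Orthogonal projection onto a subspace, viewed as a map into the ambient space. -/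
noncomputable def projS {n : ℕ} (G : Submodule ℝ (Euc n)) (x : Euc n) : Euc n :=
  (G.orthogonalProjectionOnto x : Euc n)

/-- Times for the auxiliary system `ż(t) = F_H(z(t) + h⊥(t))`, `z(t) + h⊥(t) ∈ C` a.e.,
with `h⊥` a measurable `H^⊥`-valued function, steering `P_H y0` to `P_H y1`. -/
def hatTimes {n : ℕ} (F : Euc n → Euc n) (H : Submodule ℝ (Euc n))
    (C : Set (Euc n)) (y0 y1 : Euc n) : Set ℝ :=
  {T | 0 < T ∧ ∃ z hp : ℝ → Euc n,
    Measurable hp ∧ (∀ t, hp t ∈ Hᗮ) ∧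
    IntervalIntegrable (fun s => projS H (F (z s + hp s))) volume 0 T ∧
    (∀ t ∈ Icc (0:ℝ) T, z t = projS H y0 + ∫ s in (0:ℝ)..t, projS H (F (z s + hp s))) ∧
    (∀ᵐ t ∂(volume.restrict (Icc (0:ℝ) T)), z t + hp t ∈ C) ∧
    z T = projS H y1}

/-- The auxiliary controllability time `T̂_C(y0, y1)` (with `inf ∅ = ∞`). -/
noncomputable def hatTime {n : ℕ} (F : Euc n → Euc n) (H : Submodule ℝ (Euc n))
    (C : Set (Euc n)) (y0 y1 : Euc n) : ℝ≥0∞ :=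
  sInf (ENNReal.ofReal '' hatTimes F H C y0 y1)

/-- Times for the differential inclusion `ż(t) ∈ F_H((z(t) + H^⊥) ∩ C)` steering
`P_H y0` to `P_H y1`; `z` is absolutely continuous, encoded via its a.e. derivative `v`. -/
def slowTimes {n : ℕ} (F : Euc n → Euc n) (H : Submodule ℝ (Euc n))
    (C : Set (Euc n)) (y0 y1 : Euc n) : Set ℝ :=
  {T | 0 < T ∧ ∃ z v : ℝ → Euc n,
    IntervalIntegrable v volume 0 T ∧
    (∀ t ∈ Icc (0:ℝ) T, z t = projS H y0 + ∫ s in (0:ℝ)..t, v s) ∧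
    (∀ᵐ t ∂(volume.restrict (Icc (0:ℝ) T)),
      v t ∈ (fun x => projS H (F x)) '' (((fun w => z t + w) '' (Hᗮ : Set (Euc n))) ∩ C)) ∧
    z T = projS H y1}

/-- The auxiliary controllability time `T̄_C(y0, y1)` (with `inf ∅ = ∞`). -/
noncomputable def slowTime {n : ℕ} (F : Euc n → Euc n) (H : Submodule ℝ (Euc n))
    (C : Set (Euc n)) (y0 y1 : Euc n) : ℝ≥0∞ :=
  sInf (ENNReal.ofReal '' slowTimes F H C y0 y1)

/-- The measurable selection condition: a Borel measurable map `f` defined on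
`D_f = {(h₁,h₂) ∈ H × H : ∃ h⊥ ∈ H^⊥, h₁ = F_H(h₂ + h⊥) ∧ h₂ + h⊥ ∈ C}` with
`f(h₁,h₂) ∈ H^⊥`, `h₁ = F_H(h₂ + f(h₁,h₂))` and `h₂ + f(h₁,h₂) ∈ C` on `D_f`. -/
def MeasSelection {n : ℕ} (F : Euc n → Euc n) (H : Submodule ℝ (Euc n))
    (C : Set (Euc n)) : Prop :=
  ∃ f : Euc n × Euc n → Euc n, Measurable f ∧
    ∀ h1 h2 : Euc n, h1 ∈ H → h2 ∈ H →
      (∃ hp ∈ Hᗮ, h1 = projS H (F (h2 + hp)) ∧ h2 + hp ∈ C) →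
      f (h1, h2) ∈ Hᗮ ∧ h1 = projS H (F (h2 + f (h1, h2))) ∧ h2 + f (h1, h2) ∈ C


/-!
A trajectory of the auxiliary system is a solution of the differential inclusion with velocity
`F_H(z + h⊥)`. Conversely, along a solution `z` of the inclusion with velocity `v`, the
measurable selection `f` applied to `(v(t), z(t))` recovers an admissible `h⊥(t)`, measurable
once `v` is replaced by a Borel representative and `z` by the (continuous) primitive of it.
Hence both problems have the same sets of admissible times.
-/

open scoped Interval

section IntervalIntegral

variable {E : Type*} [NormedAddCommGroup E]

lemma ae_restrict_uIoc_of_ae_restrict_Icc {p : ℝ → Prop} {a b t : ℝ}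
    (h : ∀ᵐ s ∂volume.restrict (Icc a b), p s) (ht : t ∈ Icc a b) :
    ∀ᵐ s ∂volume.restrict (Ι a t), p s :=
  ae_restrict_of_ae_restrict_of_subset
    (uIoc_subset_uIcc.trans (uIcc_subset_Icc (left_mem_Icc.2 (ht.1.trans ht.2)) ht)) h

lemma intervalIntegral_congr_of_ae_eq_Icc [NormedSpace ℝ E] {f g : ℝ → E} {a b t : ℝ}
    (h : f =ᵐ[volume.restrict (Icc a b)] g) (ht : t ∈ Icc a b) :
    ∫ s in a..t, f s = ∫ s in a..t, g s :=
  intervalIntegral.integral_congr_ae_restrict (ae_restrict_uIoc_of_ae_restrict_Icc h ht)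

lemma IntervalIntegrable.exists_measurable_integrable_ae_eq_Icc [MeasurableSpace E] [BorelSpace E]
    {f : ℝ → E} {a b : ℝ}
    (hf : IntervalIntegrable f volume a b) (hab : a ≤ b) :
    ∃ g : ℝ → E, Measurable g ∧ Integrable g ∧ f =ᵐ[volume.restrict (Icc a b)] g := by
  have hf' : IntegrableOn f (Ioc a b) := (intervalIntegrable_iff_integrableOn_Ioc_of_le hab).1 hf
  have hIcc : volume.restrict (Ioc a b) = volume.restrict (Icc a b) :=
    Measure.restrict_congr_set Ioc_ae_eq_Icc
  refine ⟨(Ioc a b).indicator (hf'.aestronglyMeasurable.mk f),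
    hf'.aestronglyMeasurable.stronglyMeasurable_mk.measurable.indicator measurableSet_Ioc,
    IntegrableOn.integrable_indicator (hf'.congr hf'.aestronglyMeasurable.ae_eq_mk)
      measurableSet_Ioc, ?_⟩
  rw [← hIcc]
  filter_upwards [hf'.aestronglyMeasurable.ae_eq_mk, ae_restrict_mem measurableSet_Ioc]
    with s hs hmem
  rw [hs, indicator_of_mem hmem]

lemma intervalIntegral_mem_of_ae_mem [InnerProductSpace ℝ E] [CompleteSpace E]
    (K : Submodule ℝ E) [K.HasOrthogonalProjection] {f : ℝ → E} {a b : ℝ}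
    (hK : ∀ᵐ s ∂volume.restrict (Ι a b), f s ∈ K) : ∫ s in a..b, f s ∈ K := by
  by_cases hf : IntervalIntegrable f volume a b
  · have hproj : ∫ s in a..b, f s = ∫ s in a..b, K.starProjection (f s) :=
      intervalIntegral.integral_congr_ae_restrict <| hK.mono fun s hs =>
        (Submodule.starProjection_eq_self_iff.2 hs).symm
    rw [hproj, K.starProjection.intervalIntegral_comp_comm hf]
    exact K.starProjection_apply_mem _
  · rw [intervalIntegral.integral_undef hf]
    exact K.zero_mem

end IntervalIntegral

section AuxiliaryTimes

variable {n : ℕ} {F : Euc n → Euc n} {H : Submodule ℝ (Euc n)} {C : Set (Euc n)}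
  {y0 y1 : Euc n} {T : ℝ}

lemma projS_mem (G : Submodule ℝ (Euc n)) (x : Euc n) : projS G x ∈ G :=
  G.starProjection_apply_mem x

lemma projS_eq_self {G : Submodule ℝ (Euc n)} {x : Euc n} (hx : x ∈ G) : projS G x = x :=
  Submodule.starProjection_eq_self_iff.2 hx

lemma hatTimes_subset_slowTimes : hatTimes F H C y0 y1 ⊆ slowTimes F H C y0 y1 := by
  rintro T ⟨hT, z, hp, -, hp_mem, hint, hz, hC, hzT⟩
  refine ⟨hT, z, fun s => projS H (F (z s + hp s)), hint, hz, ?_, hzT⟩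
  filter_upwards [hC] with t ht
  exact ⟨z t + hp t, ⟨⟨hp t, hp_mem t, rfl⟩, ht⟩, rfl⟩

/-- `f` is only known to be `Hᗮ`-valued on its domain `D_f`; projecting its value onto `Hᗮ`
changes nothing there and makes the selection `Hᗮ`-valued everywhere. -/
lemma selection_projS_spec {f : Euc n × Euc n → Euc n}
    (hf : ∀ h1 h2 : Euc n, h1 ∈ H → h2 ∈ H →
      (∃ hp ∈ Hᗮ, h1 = projS H (F (h2 + hp)) ∧ h2 + hp ∈ C) →
      f (h1, h2) ∈ Hᗮ ∧ h1 = projS H (F (h2 + f (h1, h2))) ∧ h2 + f (h1, h2) ∈ C)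
    {v z : Euc n} (hz : z ∈ H)
    (hv : v ∈ (fun x => projS H (F x)) '' (((fun w => z + w) '' (Hᗮ : Set (Euc n))) ∩ C)) :
    v = projS H (F (z + projS Hᗮ (f (v, z)))) ∧ z + projS Hᗮ (f (v, z)) ∈ C := by
  obtain ⟨_, ⟨⟨w, hw, rfl⟩, hwC⟩, rfl⟩ := hv
  obtain ⟨hfH, hfv, hfC⟩ := hf _ z (projS_mem H _) hz ⟨w, hw, rfl, hwC⟩
  rw [projS_eq_self hfH]
  exact ⟨hfv, hfC⟩

lemma slowTimes_subset_hatTimes (hsel : MeasSelection F H C) :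
    slowTimes F H C y0 y1 ⊆ hatTimes F H C y0 y1 := by
  rintro T ⟨hT, z, v, hv, hz, hvF, hzT⟩
  obtain ⟨f, hf_meas, hf⟩ := hsel
  obtain ⟨w, hw_meas, hw_int, hvw⟩ := hv.exists_measurable_integrable_ae_eq_Icc hT.le
  have hzH : ∀ t ∈ Icc (0:ℝ) T, z t ∈ H := fun t ht => by
    have hvH : ∀ᵐ s ∂(volume.restrict (Icc (0:ℝ) T)), v s ∈ H :=
      hvF.mono fun s ⟨x, _, hx⟩ => hx ▸ projS_mem H (F x)
    rw [hz t ht]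
    exact H.add_mem (projS_mem H y0)
      (intervalIntegral_mem_of_ae_mem H (ae_restrict_uIoc_of_ae_restrict_Icc hvH ht))
  -- `z` is arbitrary outside `[0, T]`, so the measurability of `hp` has to go through `z'`.
  set z' : ℝ → Euc n := fun t => projS H y0 + ∫ s in (0:ℝ)..t, w s
  have hzz' : ∀ t ∈ Icc (0:ℝ) T, z t = z' t := fun t ht => by
    rw [hz t ht, intervalIntegral_congr_of_ae_eq_Icc hvw ht]
  have hz'_meas : Measurable z' :=
    (continuous_const.add
      (intervalIntegral.continuous_primitive (fun _ _ => hw_int.intervalIntegrable) 0)).measurable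
  set hp : ℝ → Euc n := fun t => projS Hᗮ (f (w t, z' t))
  have hp_meas : Measurable hp :=
    Hᗮ.starProjection.continuous.measurable.comp (hf_meas.comp (hw_meas.prodMk hz'_meas))
  have hkey : ∀ᵐ t ∂(volume.restrict (Icc (0:ℝ) T)),
      v t = projS H (F (z t + hp t)) ∧ z t + hp t ∈ C := by
    filter_upwards [ae_restrict_mem measurableSet_Icc, hvw, hvF] with t ht hvwt hvFt
    simpa only [hp, ← hvwt, ← hzz' t ht] using
      selection_projS_spec hf (hzH t ht) hvFt
  have hvF' : v =ᵐ[volume.restrict (Icc (0:ℝ) T)] fun s => projS H (F (z s + hp s)) :=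
    hkey.mono fun _ h => h.1
  refine ⟨hT, z, hp, hp_meas, fun t => projS_mem _ _, ?_, fun t ht => ?_,
    hkey.mono fun _ h => h.2, hzT⟩
  · exact hv.congr_ae (ae_restrict_uIoc_of_ae_restrict_Icc hvF' (right_mem_Icc.2 hT.le))
  · rw [hz t ht, intervalIntegral_congr_of_ae_eq_Icc hvF' ht]

lemma hatTimes_eq_slowTimes (hsel : MeasSelection F H C) :
    hatTimes F H C y0 y1 = slowTimes F H C y0 y1 :=
  hatTimes_subset_slowTimes.antisymm (slowTimes_subset_hatTimes hsel)

end AuxiliaryTimes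

theorem hatTime_eq_slowTime_general {n m : ℕ}
    (F : Euc n → Euc n)
    (B : Euc m →ₗ[ℝ] Euc n)
    (C : Set (Euc n))
    (hsel : MeasSelection F (LinearMap.range B)ᗮ C)
    (y0 y1 : Euc n) :
    hatTime F (LinearMap.range B)ᗮ C y0 y1 = slowTime F (LinearMap.range B)ᗮ C y0 y1 := by
  rw [hatTime, slowTime, hatTimes_eq_slowTimes hsel]

/-- Lemma 1 of the paper.  For the system `ẏ = F(y) + Bu` with
`F` Lipschitz, `B` an injective linear map `ℝ^m → ℝ^n` (`m < n`), an arbitrary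
measurable constraint set `C`, and `H = (ran B)^⊥`: under the measurable selection
condition, for all `y⁰, y¹` in the interior of `C` the two auxiliary controllability
times coincide: `T̂_C(y⁰, y¹) = T̄_C(y⁰, y¹)`. -/
theorem hatTime_eq_slowTime {n m : ℕ} (hmn : m < n)
    (F : Euc n → Euc n) (L_F : ℝ) (hLF : 0 < L_F) (hF : LipschitzWith L_F.toNNReal F)
    (B : Euc m →ₗ[ℝ] Euc n) (hB : Function.Injective B)
    (C : Set (Euc n)) (hC : MeasurableSet C)
    (hsel : MeasSelection F (LinearMap.range B)ᗮ C)
    (y0 y1 : Euc n) (hy0 : y0 ∈ interior C) (hy1 : y1 ∈ interior C) :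
    hatTime F (LinearMap.range B)ᗮ C y0 y1 = slowTime F (LinearMap.range B)ᗮ C y0 y1 :=
  hatTime_eq_slowTime_general F B C hsel y0 y1
end
end

section
/- Let n = 3, m = 1, C = [−2,2]³, B u = (0,0,u)ᵀ, and let F : ℝ³ → ℝ³ be continuous and Lipschitz satisfying: (1) ⟨F(x), (0,1,0)ᵀ⟩ > 0 for every x ∈ C not lying in {(α,0,1)ᵀ : α ∈ [−1,1]} ∪ {(α,0,0)ᵀ : α ∈ [−1,1]}; (2) F((α,0,1)ᵀ) = F((β,0,0)ᵀ) = (1,0,0)ᵀ for α ∈ [−1,0], β ∈ [0,1]; (3) F((α,0,1)ᵀ) = F((β,0,0)ᵀ) = (−1,0,0)ᵀ for α ∈ [1/2,1], β ∈ [−1,−1/2]. Let y⁰ = (−1,0,1)ᵀ and y¹ = (1,0,0)ᵀ. Then T_C(y⁰,y¹) = ∞, i.e. y¹ is not reachable from y⁰ under the state constraint C. -/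
noncomputable section
open MeasureTheory Set RealInnerProductSpace
open scoped ENNReal

/-- The set of admissible controllability times `T` for the system `ẏ = F(y) + B u`
with state constraint `y(t) ∈ C`, steering `y0` to `y1`.  The control `u` is a
measurable essentially bounded function; the absolutely continuous trajectory `y`
is encoded via the integral equation. -/
def ctrlTimes {n m : ℕ} (F : Euc n → Euc n) (B : Euc m →ₗ[ℝ] Euc n)
    (C : Set (Euc n)) (y0 y1 : Euc n) : Set ℝ :=
  {T | 0 < T ∧ ∃ u : ℝ → Euc m, ∃ y : ℝ → Euc n,
    Measurable u ∧ (∃ M : ℝ, ∀ t ∈ Icc (0:ℝ) T, ‖u t‖ ≤ M) ∧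
    ContinuousOn y (Icc 0 T) ∧
    IntervalIntegrable (fun s => F (y s) + B (u s)) volume 0 T ∧
    (∀ t ∈ Icc (0:ℝ) T, y t = y0 + ∫ s in (0:ℝ)..t, (F (y s) + B (u s))) ∧
    (∀ t ∈ Icc (0:ℝ) T, y t ∈ C) ∧ y 0 = y0 ∧ y T = y1}

/-- The minimal controllability time `T_C(y0, y1)` (with the convention `inf ∅ = ∞`). -/
noncomputable def minTime {n m : ℕ} (F : Euc n → Euc n) (B : Euc m →ₗ[ℝ] Euc n)
    (C : Set (Euc n)) (y0 y1 : Euc n) : ℝ≥0∞ :=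
  sInf (ENNReal.ofReal '' ctrlTimes F B C y0 y1)

/-- The vector `(a, b, c)ᵀ ∈ ℝ³`. -/
noncomputable def v3 (a b c : ℝ) : Euc 3 := (WithLp.equiv 2 _).symm ![a, b, c]

/-- The control map `B : ℝ → ℝ³`, `u ↦ (0, 0, u)ᵀ`. -/
noncomputable def Bcol3 : Euc 1 →ₗ[ℝ] Euc 3 :=
  Matrix.toEuclideanLin (!![0; 0; 1] : Matrix (Fin 3) (Fin 1) ℝ)

/-- The cube `C = [-2, 2]³`. -/
def cube3 : Set (Euc 3) := {x : Euc 3 | ∀ i : Fin 3, x i ∈ Icc (-2:ℝ) 2}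

open Filter Topology

/-!
Coordinates are indexed from `0`. The control acts only on coordinate `2`, so `ẏ t 1 = F (y t) 1`,
and `F x 1 ≥ 0` on the whole cube by (1) and continuity. Since `y 1` vanishes at both endpoints,
`F (y t) 1 = 0` for all `t`, which by (1) confines the trajectory to the two segments. There
`y 2` is `1` or `0`, and a continuous path cannot pass from the upper segment, where it starts,
to the lower one, where it must end.
-/

@[simp] lemma v3_apply_zero (a b c : ℝ) : v3 a b c 0 = a := rfl

@[simp] lemma v3_apply_one (a b c : ℝ) : v3 a b c 1 = b := rfl

@[simp] lemma v3_apply_two (a b c : ℝ) : v3 a b c 2 = c := rfl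

lemma inner_v3_zero_one_zero (z : Euc 3) : ⟪z, v3 0 1 0⟫ = z 1 := by
  simp [PiLp.inner_apply, Fin.sum_univ_three]

@[simp] lemma Bcol3_apply_one (w : Euc 1) : Bcol3 w 1 = 0 := by
  simp [Bcol3, Matrix.toLpLin_apply, dotProduct]

lemma EuclideanSpace.intervalIntegral_apply {n : ℕ} {g : ℝ → Euc n} {a b : ℝ}
    (hg : IntervalIntegrable g volume a b) (i : Fin n) :
    (∫ s in a..b, g s) i = ∫ s in a..b, g s i :=
  ((EuclideanSpace.proj i).intervalIntegral_comp_comm hg).symm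

lemma intervalIntegral.eqOn_zero_of_integral_eq_zero {f : ℝ → ℝ} {a b : ℝ} (hab : a < b)
    (hf : ContinuousOn f (Icc a b)) (hf₀ : ∀ x ∈ Icc a b, 0 ≤ f x)
    (hint : ∫ x in a..b, f x = 0) : EqOn f 0 (Icc a b) := by
  intro c hc
  by_contra hne
  have hlt := intervalIntegral.integral_lt_integral_of_continuousOn_of_le_of_exists_lt hab
    continuousOn_const hf (fun x hx => hf₀ x (Ioc_subset_Icc_self hx))
    ⟨c, hc, lt_of_le_of_ne (hf₀ c hc) (Ne.symm hne)⟩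
  simp [hint] at hlt

lemma exists_ne_zero_ne_one_of_continuousOn {g : ℝ → ℝ} {a b : ℝ} (hab : a ≤ b)
    (hg : ContinuousOn g (Icc a b)) (ha : g a = 1) (hb : g b = 0) :
    ∃ s ∈ Icc a b, g s ≠ 0 ∧ g s ≠ 1 := by
  obtain ⟨s, hs, hgs⟩ := intermediate_value_Icc' hab hg
    (show (1 / 2 : ℝ) ∈ Icc (g b) (g a) by rw [ha, hb]; norm_num)
  exact ⟨s, hs, by rw [hgs]; norm_num, by rw [hgs]; norm_num⟩

def exampleSegments : Set (Euc 3) :=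
  (fun α => v3 α 0 1) '' Icc (-1:ℝ) 1 ∪ (fun α => v3 α 0 0) '' Icc (-1:ℝ) 1

lemma apply_of_mem_exampleSegments {x : Euc 3} (hx : x ∈ exampleSegments) :
    x 1 = 0 ∧ (x 2 = 1 ∨ x 2 = 0) := by
  rcases hx with ⟨α, -, rfl⟩ | ⟨α, -, rfl⟩ <;> simp

/-- Every point of the cube in the plane `x₁ = 0` is a limit of points `x + ε e₁` with
`ε ∈ (0, 2]`, which lie in the cube but off that plane. -/
lemma apply_one_nonneg_of_pos_off {F : Euc 3 → Euc 3} (hF : Continuous F) {S : Set (Euc 3)}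
    (hS : ∀ x ∈ S, x 1 = 0) (hpos : ∀ x ∈ cube3, x ∉ S → 0 < F x 1) :
    ∀ x ∈ cube3, 0 ≤ F x 1 := by
  intro x hx
  by_cases hxS : x ∈ S
  · have hx1 := hS x hxS
    have hshift : ∀ ε ∈ Ioc (0:ℝ) 2, 0 < F (x + ε • v3 0 1 0) 1 := by
      intro ε hε
      refine hpos _ (fun i => ?_) (fun h => ?_)
      · fin_cases i
        · simpa using hx 0
        · simpa [hx1] using ⟨by linarith [hε.1], hε.2⟩
        · simpa using hx 2
      · have := hS _ h
        simp [hx1] at this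
        exact hε.1.ne' this
    have hlim : Tendsto (fun ε : ℝ => F (x + ε • v3 0 1 0) 1) (𝓝[>] 0) (𝓝 (F x 1)) := by
      have hc : Continuous (fun ε : ℝ => F (x + ε • v3 0 1 0) 1) := by fun_prop
      simpa using hc.continuousWithinAt (s := Ioi 0) (x := 0) |>.tendsto
    refine ge_of_tendsto hlim ?_
    filter_upwards [Ioc_mem_nhdsGT (show (0:ℝ) < 2 by norm_num)] with ε hε
    exact (hshift ε hε).le
  · exact (hpos x hx hxS).le

lemma apply_one_eq_integral {F : Euc 3 → Euc 3} {u : ℝ → Euc 1} {y : ℝ → Euc 3}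
    {y0 : Euc 3} {T : ℝ} (hint : IntervalIntegrable (fun s => F (y s) + Bcol3 (u s)) volume 0 T)
    (heq : y T = y0 + ∫ s in (0:ℝ)..T, (F (y s) + Bcol3 (u s))) :
    y T 1 = y0 1 + ∫ s in (0:ℝ)..T, F (y s) 1 := by
  rw [heq, PiLp.add_apply, EuclideanSpace.intervalIntegral_apply hint]
  simp

theorem example1_not_reachable_general
    (F : Euc 3 → Euc 3) (L_F : NNReal) (hF : LipschitzWith L_F F)
    (hF1 : ∀ x ∈ cube3,
      x ∉ ((fun α => v3 α 0 1) '' Icc (-1:ℝ) 1 ∪ (fun α => v3 α 0 0) '' Icc (-1:ℝ) 1) →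
      (0:ℝ) < ⟪F x, v3 0 1 0⟫) :
    minTime F Bcol3 cube3 (v3 (-1) 0 1) (v3 1 0 0) = ⊤ := by
  suffices hempty : ctrlTimes F Bcol3 cube3 (v3 (-1) 0 1) (v3 1 0 0) = ∅ by
    simp [minTime, hempty]
  refine eq_empty_of_forall_notMem ?_
  rintro T ⟨hT, u, y, -, -, hy, hint, heq, hC, hy0, hyT⟩
  have hpos : ∀ x ∈ cube3, x ∉ exampleSegments → 0 < F x 1 := fun x hx hxS => by
    simpa [inner_v3_zero_one_zero] using hF1 x hx hxS
  have hnonneg := apply_one_nonneg_of_pos_off hF.continuous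
    (fun _ hx => (apply_of_mem_exampleSegments hx).1) hpos
  have hFy : ContinuousOn (fun s => F (y s) 1) (Icc 0 T) :=
    (PiLp.continuous_apply 2 _ 1).comp_continuousOn (hF.continuous.comp_continuousOn hy)
  have hzero : EqOn (fun s => F (y s) 1) 0 (Icc 0 T) :=
    intervalIntegral.eqOn_zero_of_integral_eq_zero hT hFy (fun s hs => hnonneg _ (hC s hs)) <| by
      simpa [hyT] using (apply_one_eq_integral hint (heq T ⟨hT.le, le_rfl⟩)).symm
  obtain ⟨s, hs, hs0, hs1⟩ := exists_ne_zero_ne_one_of_continuousOn (g := fun s => y s 2) hT.le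
    ((PiLp.continuous_apply 2 _ 2).comp_continuousOn hy) (by simp [hy0]) (by simp [hyT])
  have hseg : y s ∈ exampleSegments := by
    by_contra h
    exact (hpos _ (hC s hs) h).ne' (hzero hs)
  rcases (apply_of_mem_exampleSegments hseg).2 with h | h
  exacts [hs1 h, hs0 h]

/-- Example 1 of the paper.  Let `C = [-2,2]³`, `Bu = (0,0,u)ᵀ`,
and let `F : ℝ³ → ℝ³` be Lipschitz and satisfy:
(1) `⟨F(x), (0,1,0)ᵀ⟩ > 0` for every `x ∈ C` outside
`{(α,0,1)ᵀ : α ∈ [-1,1]} ∪ {(α,0,0)ᵀ : α ∈ [-1,1]}`;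
(2) `F((α,0,1)ᵀ) = F((β,0,0)ᵀ) = (1,0,0)ᵀ` for `α ∈ [-1,0]`, `β ∈ [0,1]`;
(3) `F((α,0,1)ᵀ) = F((β,0,0)ᵀ) = (-1,0,0)ᵀ` for `α ∈ [1/2,1]`, `β ∈ [-1,-1/2]`.
Then `y¹ = (1,0,0)ᵀ` is not reachable from `y⁰ = (-1,0,1)ᵀ` under the state
constraint `C`: `T_C(y⁰, y¹) = ∞`. -/
theorem example1_not_reachable
    (F : Euc 3 → Euc 3) (L_F : NNReal) (hF : LipschitzWith L_F F)
    (hF1 : ∀ x ∈ cube3,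
      x ∉ ((fun α => v3 α 0 1) '' Icc (-1:ℝ) 1 ∪ (fun α => v3 α 0 0) '' Icc (-1:ℝ) 1) →
      (0:ℝ) < ⟪F x, v3 0 1 0⟫)
    (hF2 : (∀ α ∈ Icc (-1:ℝ) 0, F (v3 α 0 1) = v3 1 0 0) ∧
           (∀ β ∈ Icc (0:ℝ) 1, F (v3 β 0 0) = v3 1 0 0))
    (hF3 : (∀ α ∈ Icc (1/2:ℝ) 1, F (v3 α 0 1) = v3 (-1) 0 0) ∧
           (∀ β ∈ Icc (-1:ℝ) (-1/2), F (v3 β 0 0) = v3 (-1) 0 0)) :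
    minTime F Bcol3 cube3 (v3 (-1) 0 1) (v3 1 0 0) = ⊤ :=
  example1_not_reachable_general F L_F hF hF1
end
end
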